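/- (Pushout-pullback lemma) Let A be an MV-algebra and a₁, a₂ ∈ A. Then the square of quotient maps A/(a₁ ∧ a₂) → A/(a₁), A/(a₁ ∧ a₂) → A/(a₂), A/(a₁) → A/(a₁ ∨ a₂), A/(a₂) → A/(a₁ ∨ a₂) is a pullback: given b₁, b₂ ∈ A with [b₁] = [b₂] in A/(a₁ ∨ a₂), there exists b ∈ A, unique modulo (a₁ ∧ a₂), with [b] = [b₁] in A/(a₁) and [b] = [b₂] in A/(a₂). -/

import Mathlib

/-- An MV-algebra: a set with ⊕ (written `+`), ¬ (written `-`) and `0`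
satisfying the standard MV-algebra axioms. -/
class MVAlgebra (A : Type*) extends Add A, Neg A, Zero A where
  add_assoc : ∀ x y z : A, x + (y + z) = (x + y) + z
  add_comm : ∀ x y : A, x + y = y + x
  add_zero : ∀ x : A, x + 0 = x
  neg_neg : ∀ x : A, - -x = x
  add_neg_zero : ∀ x : A, x + -0 = -0
  luk : ∀ x y : A, -(-x + y) + y = -(-y + x) + x

namespace MVAlgebra

variable {A : Type*} [MVAlgebra A]

/-- The top element `1 = ¬0`. -/
def one : A := -0

/-- Truncated difference `x ⊖ y = ¬(¬x ⊕ y)`. -/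
def sub (x y : A) : A := -(-x + y)

/-- Supremum `x ∨ y = (x ⊖ y) ⊕ y`. -/
def sup (x y : A) : A := sub x y + y

/-- Infimum `x ∧ y = ¬(¬x ∨ ¬y)`. -/
def inf (x y : A) : A := -(sup (-x) (-y))

/-- The natural order: `x ≤ y` iff `x ⊖ y = 0`. -/
def le (x y : A) : Prop := sub x y = 0

/-- `n • x = x ⊕ ⋯ ⊕ x` (`n` times). -/
def nsmul : ℕ → A → A
  | 0, _ => 0
  | n + 1, x => nsmul n x + x

/-- The distance `d(x,y) = (x ⊖ y) ⊕ (y ⊖ x)`. -/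
def d (x y : A) : A := sub x y + sub y x

/-- Ideals: contain `0`, downward closed, closed under `⊕`. -/
def IsIdeal (I : Set A) : Prop :=
  (0 : A) ∈ I ∧ (∀ x y : A, x ∈ I → le y x → y ∈ I) ∧
    (∀ x y : A, x ∈ I → y ∈ I → x + y ∈ I)

/-- Prime ideals: proper ideals with `x ⊖ y ∈ P` or `y ⊖ x ∈ P` for all `x, y`. -/
def IsPrime (P : Set A) : Prop :=
  IsIdeal P ∧ P ≠ Set.univ ∧ ∀ x y : A, sub x y ∈ P ∨ sub y x ∈ P

/-- The principal ideal `(a) = {x | x ≤ n·a for some n}`. -/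
def princ (a : A) : Set A := {x : A | ∃ n : ℕ, le x (nsmul n a)}

end MVAlgebra

/-!
With `x ⊖ y` as truncated subtraction, an MV-algebra is a canonically ordered commutative
monoid with ordered subtraction whose natural order is a lattice, so the general theory of
such monoids applies. If `d(b₁, b₂) ≤ c₁ ⊕ c₂` with `cᵢ = n·aᵢ`, then
`b = (b₁ ⊖ c₁) ∨ (b₂ ⊖ c₂)` is within `c₁ ⊕ c₁` of `b₁` and within `c₂ ⊕ c₂` of `b₂`.
Two such solutions are congruent modulo `(a₁)` and modulo `(a₂)`, hence modulo
`(a₁ ∧ a₂)`: the distributivity `x ∧ (y ⊕ z) ≤ (x ∧ y) ⊕ (x ∧ z)`, which holds in any such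
monoid, gives `(m·a) ∧ (n·b) ≤ mn·(a ∧ b)`.
-/

section LatticeOrderedSub

variable {α : Type*} [Lattice α] [AddCommMonoid α] [Sub α] [OrderedSub α]

theorem inf_add_add_le_add_inf (a b c : α) : (a + b) ⊓ (a + c) ≤ a + b ⊓ c :=
  tsub_le_iff_left.1 <| le_inf
    ((tsub_le_tsub_right inf_le_left a).trans add_tsub_le_left)
    ((tsub_le_tsub_right inf_le_right a).trans add_tsub_le_left)

theorem inf_add_le_inf_add_inf [CanonicallyOrderedAdd α] (a b c : α) :
    a ⊓ (b + c) ≤ a ⊓ b + a ⊓ c := by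
  have hc : a ⊓ (b + c) ≤ c + a ⊓ b :=
    calc a ⊓ (b + c) ≤ (c + a) ⊓ (c + b) :=
          le_inf (inf_le_left.trans le_add_self) (inf_le_right.trans_eq (add_comm b c))
      _ ≤ c + a ⊓ b := inf_add_add_le_add_inf c a b
  calc a ⊓ (b + c) ≤ (a ⊓ b + a) ⊓ (a ⊓ b + c) :=
        le_inf (inf_le_left.trans le_add_self) (hc.trans_eq (add_comm _ _))
    _ ≤ a ⊓ b + a ⊓ c := inf_add_add_le_add_inf _ _ _

theorem nsmul_inf_le_nsmul_inf [IsOrderedAddMonoid α] [CanonicallyOrderedAdd α] (n : ℕ) (a b : α) :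
    (n • a) ⊓ b ≤ n • (a ⊓ b) := by
  induction n with
  | zero => simp
  | succ n ih =>
    calc ((n + 1) • a) ⊓ b = b ⊓ (n • a + a) := by rw [succ_nsmul, inf_comm]
      _ ≤ b ⊓ n • a + b ⊓ a := inf_add_le_inf_add_inf b _ a
      _ ≤ n • (a ⊓ b) + a ⊓ b := by rw [inf_comm b, inf_comm b]; exact add_le_add_left ih _
      _ = (n + 1) • (a ⊓ b) := (succ_nsmul _ n).symm

theorem nsmul_inf_nsmul_le_mul_nsmul_inf [IsOrderedAddMonoid α] [CanonicallyOrderedAdd α]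
    (m n : ℕ) (a b : α) : (m • a) ⊓ (n • b) ≤ (m * n) • (a ⊓ b) :=
  calc (m • a) ⊓ (n • b) ≤ m • (a ⊓ n • b) := nsmul_inf_le_nsmul_inf m a (n • b)
    _ ≤ m • (n • (a ⊓ b)) := by
        rw [inf_comm, inf_comm a]; exact nsmul_le_nsmul_right (nsmul_inf_le_nsmul_inf n b a) m
    _ = (m * n) • (a ⊓ b) := (mul_nsmul' _ m n).symm

theorem tsub_sup_tsub_le_add [CanonicallyOrderedAdd α] {b₁ b₂ c₁ c₂ : α}
    (h : b₂ - b₁ ≤ c₁ + c₂) :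
    (b₁ - c₁) ⊔ (b₂ - c₂) ≤ b₁ + c₁ :=
  sup_le (tsub_le_self.trans le_self_add)
    (tsub_le_iff_right.2 (by rw [add_assoc]; exact tsub_le_iff_left.1 h))

theorem tsub_tsub_sup_le [IsOrderedAddMonoid α] (b c x : α) : b - ((b - c) ⊔ x) ≤ c :=
  (tsub_le_tsub_left le_sup_left b).trans tsub_tsub_le

end LatticeOrderedSub

namespace MVAlgebra

variable {A : Type*} [MVAlgebra A]

instance : AddCommMonoid A where
  add_assoc x y z := (MVAlgebra.add_assoc x y z).symm
  zero_add x := by rw [add_comm, add_zero]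
  add_zero := add_zero
  add_comm := add_comm
  nsmul := nsmul
  nsmul_zero _ := rfl
  nsmul_succ _ _ := rfl

-- Binary `-` is the truncated difference `⊖`, while unary `-` remains the negation `¬`.
instance : Sub A := ⟨sub⟩

theorem tsub_add_self_comm (x y : A) : x - y + y = y - x + x := luk x y

theorem le_iff_exists_add_eq {x y : A} : le x y ↔ ∃ z, y = x + z := by
  constructor
  · intro h
    refine ⟨y - x, ?_⟩
    have h' : x - y = 0 := h
    rw [add_comm x, ← tsub_add_self_comm, h', zero_add]
  · rintro ⟨z, rfl⟩
    show -(-x + (x + z)) = 0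
    have hx : -x + x = -0 := by simpa [neg_neg, zero_add, add_neg_zero] using luk (-0) x
    rw [MVAlgebra.add_assoc, hx, add_comm, add_neg_zero, neg_neg]

instance : PartialOrder A where
  le := le
  le_refl x := le_iff_exists_add_eq.2 ⟨0, (add_zero x).symm⟩
  le_trans x y z := by
    simp only [le_iff_exists_add_eq]
    rintro ⟨u, rfl⟩ ⟨v, rfl⟩
    exact ⟨u + v, _root_.add_assoc x u v⟩
  le_antisymm x y hxy hyx := by
    have h := tsub_add_self_comm x y
    rwa [show x - y = 0 from hxy, show y - x = 0 from hyx, zero_add, zero_add,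
      eq_comm] at h

instance : IsOrderedAddMonoid A where
  add_le_add_left x y h z := by
    obtain ⟨u, rfl⟩ := le_iff_exists_add_eq.1 h
    exact le_iff_exists_add_eq.2 ⟨u, add_right_comm x u z⟩

instance : CanonicallyOrderedAdd A where
  exists_add_of_le h := le_iff_exists_add_eq.1 h
  le_add_self _ y := le_iff_exists_add_eq.2 ⟨y, add_comm _ _⟩
  le_self_add _ y := le_iff_exists_add_eq.2 ⟨y, rfl⟩

theorem tsub_tsub_eq_tsub_add (x y z : A) : x - y - z = x - (y + z) := by
  show -(- -(-x + y) + z) = -(-x + (y + z))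
  rw [neg_neg, MVAlgebra.add_assoc]

instance : OrderedSub A where
  tsub_le_iff_right x y z := by
    show x - y - z = 0 ↔ x - (z + y) = 0
    rw [tsub_tsub_eq_tsub_add, add_comm]

instance : SemilatticeSup A where
  sup := sup
  le_sup_left _ _ := le_tsub_add
  le_sup_right _ _ := le_add_self
  sup_le x y z hx hy :=
    calc x - y + y ≤ z - y + y := add_le_add_left (tsub_le_tsub_right hx y) y
      _ = y - z + z := tsub_add_self_comm z y
      _ = z := by rw [tsub_eq_zero_of_le hy, zero_add]

theorem neg_le_neg_iff {x y : A} : -x ≤ -y ↔ y ≤ x := by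
  show -(- -x + -y) = 0 ↔ -(-y + x) = 0
  rw [neg_neg, add_comm]

theorem neg_le_comm {x y : A} : -x ≤ y ↔ -y ≤ x := by
  rw [← neg_le_neg_iff, neg_neg]

theorem le_neg_comm {x y : A} : x ≤ -y ↔ y ≤ -x := by
  rw [← neg_le_neg_iff, neg_neg]

instance : Lattice A where
  inf := inf
  inf_le_left _ _ := neg_le_comm.1 le_sup_left
  inf_le_right _ _ := neg_le_comm.1 le_sup_right
  le_inf _ _ _ hx hy := le_neg_comm.2 (sup_le (neg_le_neg_iff.2 hx) (neg_le_neg_iff.2 hy))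

theorem d_comm (x y : A) : d x y = d y x := add_comm _ _

theorem d_triangle (x y z : A) : d x z ≤ d x y + d y z :=
  calc x - z + (z - x) ≤ (x - y + (y - z)) + (z - y + (y - x)) :=
        add_le_add tsub_le_tsub_add_tsub tsub_le_tsub_add_tsub
    _ = (x - y + (y - x)) + (y - z + (z - y)) := by ac_rfl

theorem mem_princ_iff {a x : A} : x ∈ princ a ↔ ∃ n : ℕ, x ≤ n • a := Iff.rfl

theorem mem_princ_of_le {a x y : A} (hy : y ∈ princ a) (hxy : x ≤ y) : x ∈ princ a :=
  let ⟨n, hn⟩ := mem_princ_iff.1 hy; mem_princ_iff.2 ⟨n, hxy.trans hn⟩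

theorem add_mem_princ {a x y : A} (hx : x ∈ princ a) (hy : y ∈ princ a) : x + y ∈ princ a :=
  let ⟨m, hm⟩ := mem_princ_iff.1 hx; let ⟨n, hn⟩ := mem_princ_iff.1 hy
  mem_princ_iff.2 ⟨m + n, (add_le_add hm hn).trans_eq (add_nsmul a m n).symm⟩

theorem mem_princ_inf {a₁ a₂ x : A} (h₁ : x ∈ princ a₁) (h₂ : x ∈ princ a₂) :
    x ∈ princ (a₁ ⊓ a₂) :=
  let ⟨m, hm⟩ := mem_princ_iff.1 h₁; let ⟨n, hn⟩ := mem_princ_iff.1 h₂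
  mem_princ_iff.2 ⟨m * n, (le_inf hm hn).trans (nsmul_inf_nsmul_le_mul_nsmul_inf m n a₁ a₂)⟩

theorem exists_le_nsmul_add_nsmul_of_mem_princ_sup {a₁ a₂ x : A} (h : x ∈ princ (a₁ ⊔ a₂)) :
    ∃ n : ℕ, x ≤ n • a₁ + n • a₂ :=
  let ⟨n, hn⟩ := mem_princ_iff.1 h
  ⟨n, hn.trans ((nsmul_le_nsmul_right (sup_le le_self_add le_add_self) n).trans_eq
    (nsmul_add a₁ a₂ n))⟩

theorem d_mem_princ_comm {a x y : A} : d x y ∈ princ a ↔ d y x ∈ princ a := by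
  rw [d_comm]

theorem d_mem_princ_trans {a x y z : A} (hxy : d x y ∈ princ a) (hyz : d y z ∈ princ a) :
    d x z ∈ princ a :=
  mem_princ_of_le (add_mem_princ hxy hyz) (d_triangle x y z)

theorem d_sup_tsub_le {b₁ b₂ c₁ c₂ : A} (h : b₂ - b₁ ≤ c₁ + c₂) :
    d ((b₁ - c₁) ⊔ (b₂ - c₂)) b₁ ≤ c₁ + c₁ :=
  add_le_add (tsub_le_iff_left.2 (tsub_sup_tsub_le_add h)) (tsub_tsub_sup_le b₁ c₁ _)

theorem exists_d_mem_princ_of_d_le {a₁ a₂ b₁ b₂ : A} {n : ℕ} (h : d b₁ b₂ ≤ n • a₁ + n • a₂) :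
    ∃ b, d b b₁ ∈ princ a₁ ∧ d b b₂ ∈ princ a₂ := by
  refine ⟨(b₁ - n • a₁) ⊔ (b₂ - n • a₂),
    mem_princ_iff.2 ⟨n + n, ?_⟩, mem_princ_iff.2 ⟨n + n, ?_⟩⟩
  · rw [add_nsmul]
    exact d_sup_tsub_le (le_add_self.trans h)
  · rw [add_nsmul, sup_comm]
    exact d_sup_tsub_le (le_self_add.trans (h.trans_eq (add_comm _ _)))

end MVAlgebra

open MVAlgebra in
/-- pushout-pullback lemma: given `b₁ ≡ b₂ mod (a₁ ∨ a₂)`,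
there is `b`, unique modulo `(a₁ ∧ a₂)`, with `b ≡ b₁ mod (a₁)` and
`b ≡ b₂ mod (a₂)`; i.e. the square of quotients is a pullback. -/
theorem pushout_pullback {A : Type*} [MVAlgebra A] (a₁ a₂ b₁ b₂ : A)
    (h : d b₁ b₂ ∈ princ (sup a₁ a₂)) :
    ∃ b : A, d b b₁ ∈ princ a₁ ∧ d b b₂ ∈ princ a₂ ∧
      ∀ b' : A, d b' b₁ ∈ princ a₁ → d b' b₂ ∈ princ a₂ →
        d b' b ∈ princ (inf a₁ a₂) := by
  obtain ⟨n, hn⟩ := exists_le_nsmul_add_nsmul_of_mem_princ_sup h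
  obtain ⟨b, hb₁, hb₂⟩ := exists_d_mem_princ_of_d_le hn
  refine ⟨b, hb₁, hb₂, fun b' hb₁' hb₂' => mem_princ_inf ?_ ?_⟩
  · exact d_mem_princ_trans hb₁' (d_mem_princ_comm.1 hb₁)
  · exact d_mem_princ_trans hb₂' (d_mem_princ_comm.1 hb₂)
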